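/- Let (α_j, β_j) and (α_k, β_k) be two independent pairs of complex random variables, each pair satisfying E α = E β = 0, E|α|² = E|β|² = 1/2, E α² = E β² = 0, E(αβ) = E(α conj(β)) = 0. Define ϖ = α_k conj(α_j) + β_k conj(β_j) and ω = −α_k β_j + β_k α_j. Then E ϖ² = E ω² = E(ϖ ω) = E(conj(ϖ) ω) = 0 and E|ϖ|² = E|ω|² = 1/2. -/

import Mathlib

/-!
With `Y = (α_k, β_k)`, `X = (α_j, β_j)` and `J (a, b) = (-b, a)` we have `ϖ = Y ⬝ X̄` and
`ω = Y ⬝ J X`. Independence factorises the second moments of such bilinear forms: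
`E[(U ⬝ V)(U' ⬝ V')] = ∑ᵢⱼ E[Uᵢ U'ⱼ] E[Vᵢ V'ⱼ]` when `(U, U')` is independent of `(V, V')`.
Since `E[Y Yᵀ] = 0`, every product without a factor `Ȳ` vanishes; since `E[Ȳ Yᵀ] = ½ I`, the
others reduce to `½ E[V ⬝ V']`, which is `½ E[X ⬝ J X] = 0` for `ϖ̄ ω` and `½ E[‖X‖²] = ½` for
`|ϖ|²` and `|ω|²` (note `‖J X‖ = ‖X‖`).
-/

open MeasureTheory ProbabilityTheory Matrix

section DotProduct

variable {R n : Type*}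

theorem star_dotProduct_eq_star_dotProduct_star [CommSemiring R] [StarRing R] [Fintype n]
    (v w : n → R) : star (v ⬝ᵥ w) = star v ⬝ᵥ star w := by
  rw [star_dotProduct_star, dotProduct_comm]

/-- For `v = (α, β)` this is the conjugate of the second row `(-conj β, conj α)` of the
quaternion `[[α, β], [-conj β, conj α]]`. -/
def symplecticJ [Neg R] (v : Fin 2 → R) : Fin 2 → R := ![-v 1, v 0]

@[fun_prop]
theorem continuous_symplecticJ [TopologicalSpace R] [Neg R] [ContinuousNeg R] :
    Continuous (symplecticJ : (Fin 2 → R) → Fin 2 → R) := by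
  unfold symplecticJ
  fun_prop

theorem dotProduct_symplecticJ_self [CommRing R] (v : Fin 2 → R) : v ⬝ᵥ symplecticJ v = 0 := by
  simp [symplecticJ, dotProduct, Fin.sum_univ_two, mul_comm]

theorem star_symplecticJ_dotProduct_symplecticJ [CommRing R] [StarRing R] (v : Fin 2 → R) :
    star (symplecticJ v) ⬝ᵥ symplecticJ v = star v ⬝ᵥ v := by
  simp [symplecticJ, dotProduct, Fin.sum_univ_two, add_comm]

end DotProduct

variable {Ω ι : Type*} [MeasurableSpace Ω] {P : Measure Ω}

theorem ofReal_integral_norm_sq (f : Ω → ℂ) :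
    ((∫ ω, ‖f ω‖ ^ 2 ∂P : ℝ) : ℂ) = ∫ ω, starRingEnd ℂ (f ω) * f ω ∂P := by
  rw [← integral_complex_ofReal]
  simp [Complex.conj_mul']

theorem memLp_symplecticJ {X : Ω → Fin 2 → ℂ} (hX : ∀ i, MemLp (X · i) 2 P) :
    ∀ i, MemLp (fun ω => symplecticJ (X ω) i) 2 P :=
  Fin.forall_fin_two.2 ⟨(hX 1).neg, hX 0⟩

section Independence

variable {𝕜 : Type*} [RCLike 𝕜] [Fintype ι] {U U' V V' : Ω → ι → 𝕜}

theorem integral_dotProduct_mul_dotProduct_of_indepFun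
    (hindep : IndepFun (fun ω => (U ω, U' ω)) (fun ω => (V ω, V' ω)) P)
    (hU : ∀ i, MemLp (U · i) 2 P) (hU' : ∀ i, MemLp (U' · i) 2 P)
    (hV : ∀ i, MemLp (V · i) 2 P) (hV' : ∀ i, MemLp (V' · i) 2 P) :
    ∫ ω, (U ω ⬝ᵥ V ω) * (U' ω ⬝ᵥ V' ω) ∂P =
      ∑ i, ∑ j, (∫ ω, U ω i * U' ω j ∂P) * ∫ ω, V ω i * V' ω j ∂P := by
  have hentry (i j : ι) : Measurable fun p : (ι → 𝕜) × (ι → 𝕜) => p.1 i * p.2 j := by fun_prop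
  have hindep_entry (i j : ι) :
      IndepFun (fun ω => U ω i * U' ω j) (fun ω => V ω i * V' ω j) P :=
    hindep.comp (hentry i j) (hentry i j)
  have hUU (i j : ι) : Integrable (fun ω => U ω i * U' ω j) P := (hU i).integrable_mul (hU' j)
  have hVV (i j : ι) : Integrable (fun ω => V ω i * V' ω j) P := (hV i).integrable_mul (hV' j)
  have hterm (i j : ι) :
      Integrable (fun ω => U ω i * U' ω j * (V ω i * V' ω j)) P :=
    (hindep_entry i j).integrable_mul (hUU i j) (hVV i j)
  have hexpand (ω : Ω) : (U ω ⬝ᵥ V ω) * (U' ω ⬝ᵥ V' ω) =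
      ∑ i, ∑ j, U ω i * U' ω j * (V ω i * V' ω j) := by
    simp only [dotProduct, Finset.sum_mul_sum]
    exact Finset.sum_congr rfl fun i _ => Finset.sum_congr rfl fun j _ => by ring
  simp_rw [hexpand]
  rw [integral_finsetSum _ fun i _ => integrable_finsetSum _ fun j _ => hterm i j]
  refine Finset.sum_congr rfl fun i _ => ?_
  rw [integral_finsetSum _ fun j _ => hterm i j]
  exact Finset.sum_congr rfl fun j _ =>
    (hindep_entry i j).integral_fun_mul_eq_mul_integral (hUU i j).1 (hVV i j).1

end Independence

/-- Second moments of a proper (circular) complex random vector with scalar covariance: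
`E[Z Zᵀ] = 0` and `E[Z̄ Zᵀ] = c • 1`. -/
structure IsProperIsotropic [DecidableEq ι] (P : Measure Ω) (Z : Ω → ι → ℂ) (c : ℝ) : Prop where
  memLp : ∀ i, MemLp (Z · i) 2 P
  integral_mul : ∀ i j, ∫ ω, Z ω i * Z ω j ∂P = 0
  integral_star_mul : ∀ i j, ∫ ω, star (Z ω i) * Z ω j ∂P = if i = j then (c : ℂ) else 0

theorem isProperIsotropic_pair {α β : Ω → ℂ} {c : ℝ} (hα : MemLp α 2 P) (hβ : MemLp β 2 P)
    (hα_sq : ∫ ω, α ω ^ 2 ∂P = 0) (hβ_sq : ∫ ω, β ω ^ 2 ∂P = 0)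
    (hαβ : ∫ ω, α ω * β ω ∂P = 0) (hα_norm : ∫ ω, ‖α ω‖ ^ 2 ∂P = c)
    (hβ_norm : ∫ ω, ‖β ω‖ ^ 2 ∂P = c) (hαβ_conj : ∫ ω, α ω * starRingEnd ℂ (β ω) ∂P = 0) :
    IsProperIsotropic P (fun ω => ![α ω, β ω]) c where
  memLp := Fin.forall_fin_two.2 ⟨hα, hβ⟩
  integral_mul i j := by
    fin_cases i <;> fin_cases j <;> simp [← sq, hα_sq, hβ_sq, hαβ, mul_comm (β _)]
  integral_star_mul i j := by
    have hαα : ∫ ω, starRingEnd ℂ (α ω) * α ω ∂P = c := by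
      rw [← ofReal_integral_norm_sq, hα_norm]
    have hββ : ∫ ω, starRingEnd ℂ (β ω) * β ω ∂P = c := by
      rw [← ofReal_integral_norm_sq, hβ_norm]
    have hβα : ∫ ω, starRingEnd ℂ (β ω) * α ω ∂P = 0 := by simpa only [mul_comm] using hαβ_conj
    have hαβ' : ∫ ω, starRingEnd ℂ (α ω) * β ω ∂P = 0 := by
      have h := congrArg (starRingEnd ℂ) hαβ_conj
      rw [← integral_conj, map_zero] at h
      simpa [mul_comm] using h
    fin_cases i <;> fin_cases j <;> simp [hαα, hββ, hαβ', hβα]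

namespace IsProperIsotropic

variable [Fintype ι] [DecidableEq ι] {Y : Ω → ι → ℂ} {c : ℝ}

theorem integral_star_dotProduct_self (hY : IsProperIsotropic P Y c) :
    ∫ ω, star (Y ω) ⬝ᵥ Y ω ∂P = Fintype.card ι * c := by
  have hYY (i : ι) : Integrable (fun ω => star (Y ω i) * Y ω i) P :=
    (hY.memLp i).star.integrable_mul (hY.memLp i)
  simp only [dotProduct, Pi.star_apply]
  rw [integral_finsetSum _ fun i _ => hYY i]
  simp only [hY.integral_star_mul, if_pos, Finset.sum_const, Finset.card_univ, nsmul_eq_mul]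

variable {β : Type*} [MeasurableSpace β] {X : Ω → β} {f f' : β → ι → ℂ}

theorem integral_dotProduct_mul_dotProduct_eq_zero (hY : IsProperIsotropic P Y c)
    (hYX : IndepFun Y X P) (hf : Measurable f) (hf' : Measurable f')
    (hfX : ∀ i, MemLp (fun ω => f (X ω) i) 2 P) (hf'X : ∀ i, MemLp (fun ω => f' (X ω) i) 2 P) :
    ∫ ω, (Y ω ⬝ᵥ f (X ω)) * (Y ω ⬝ᵥ f' (X ω)) ∂P = 0 := by
  have hindep : IndepFun (fun ω => (Y ω, Y ω)) (fun ω => (f (X ω), f' (X ω))) P :=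
    hYX.comp (φ := fun y => (y, y)) (by fun_prop) (hf.prodMk hf')
  simp [integral_dotProduct_mul_dotProduct_of_indepFun hindep hY.memLp hY.memLp hfX hf'X,
    hY.integral_mul]

theorem integral_star_dotProduct_mul_dotProduct (hY : IsProperIsotropic P Y c)
    (hYX : IndepFun Y X P) (hf : Measurable f) (hf' : Measurable f')
    (hfX : ∀ i, MemLp (fun ω => f (X ω) i) 2 P) (hf'X : ∀ i, MemLp (fun ω => f' (X ω) i) 2 P) :
    ∫ ω, (star (Y ω) ⬝ᵥ f (X ω)) * (Y ω ⬝ᵥ f' (X ω)) ∂P = c * ∫ ω, f (X ω) ⬝ᵥ f' (X ω) ∂P := by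
  have hindep : IndepFun (fun ω => (star (Y ω), Y ω)) (fun ω => (f (X ω), f' (X ω))) P :=
    hYX.comp (φ := fun y => (star y, y)) (by fun_prop) (hf.prodMk hf')
  have hff' (i : ι) : Integrable (fun ω => f (X ω) i * f' (X ω) i) P :=
    (hfX i).integrable_mul (hf'X i)
  rw [integral_dotProduct_mul_dotProduct_of_indepFun hindep (fun i => (hY.memLp i).star)
    hY.memLp hfX hf'X]
  simp only [dotProduct]
  rw [integral_finsetSum _ fun i _ => hff' i, Finset.mul_sum]
  simp only [Pi.star_apply, hY.integral_star_mul, ite_mul, zero_mul, Finset.sum_ite_eq,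
    Finset.mem_univ, if_true]

end IsProperIsotropic

section Quaternion

variable {Y X : Ω → Fin 2 → ℂ} {c c' : ℝ}

theorem integral_dotProduct_star_sq_eq_zero (hYX : IndepFun Y X P)
    (hY : IsProperIsotropic P Y c) (hX : ∀ i, MemLp (X · i) 2 P) :
    ∫ ω, (Y ω ⬝ᵥ star (X ω)) ^ 2 ∂P = 0 := by
  simp only [sq]
  exact hY.integral_dotProduct_mul_dotProduct_eq_zero hYX
    continuous_star.measurable continuous_star.measurable (fun i => (hX i).star)
    (fun i => (hX i).star)

theorem integral_dotProduct_symplecticJ_sq_eq_zero (hYX : IndepFun Y X P)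
    (hY : IsProperIsotropic P Y c) (hX : ∀ i, MemLp (X · i) 2 P) :
    ∫ ω, (Y ω ⬝ᵥ symplecticJ (X ω)) ^ 2 ∂P = 0 := by
  simp only [sq]
  exact hY.integral_dotProduct_mul_dotProduct_eq_zero hYX
    continuous_symplecticJ.measurable continuous_symplecticJ.measurable (memLp_symplecticJ hX)
    (memLp_symplecticJ hX)

theorem integral_dotProduct_star_mul_dotProduct_symplecticJ_eq_zero (hYX : IndepFun Y X P)
    (hY : IsProperIsotropic P Y c) (hX : ∀ i, MemLp (X · i) 2 P) :
    ∫ ω, (Y ω ⬝ᵥ star (X ω)) * (Y ω ⬝ᵥ symplecticJ (X ω)) ∂P = 0 :=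
  hY.integral_dotProduct_mul_dotProduct_eq_zero hYX
    continuous_star.measurable continuous_symplecticJ.measurable (fun i => (hX i).star)
    (memLp_symplecticJ hX)

theorem integral_conj_dotProduct_star_mul_dotProduct_symplecticJ_eq_zero (hYX : IndepFun Y X P)
    (hY : IsProperIsotropic P Y c) (hX : ∀ i, MemLp (X · i) 2 P) :
    ∫ ω, starRingEnd ℂ (Y ω ⬝ᵥ star (X ω)) * (Y ω ⬝ᵥ symplecticJ (X ω)) ∂P = 0 := by
  simp only [starRingEnd_apply, star_dotProduct_eq_star_dotProduct_star, star_star]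
  rw [hY.integral_star_dotProduct_mul_dotProduct hYX measurable_id'
    continuous_symplecticJ.measurable hX (memLp_symplecticJ hX)]
  simp only [dotProduct_symplecticJ_self, integral_zero, mul_zero]

theorem integral_norm_dotProduct_star_sq (hYX : IndepFun Y X P)
    (hY : IsProperIsotropic P Y c) (hX : IsProperIsotropic P X c') :
    ∫ ω, ‖Y ω ⬝ᵥ star (X ω)‖ ^ 2 ∂P = 2 * c * c' := by
  apply Complex.ofReal_injective
  rw [ofReal_integral_norm_sq]
  simp only [starRingEnd_apply, star_dotProduct_eq_star_dotProduct_star, star_star]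
  rw [hY.integral_star_dotProduct_mul_dotProduct hYX measurable_id'
    continuous_star.measurable hX.memLp (fun i => (hX.memLp i).star)]
  simp only [dotProduct_comm (X _), hX.integral_star_dotProduct_self, Fintype.card_fin]
  push_cast
  ring

theorem integral_norm_dotProduct_symplecticJ_sq (hYX : IndepFun Y X P)
    (hY : IsProperIsotropic P Y c) (hX : IsProperIsotropic P X c') :
    ∫ ω, ‖Y ω ⬝ᵥ symplecticJ (X ω)‖ ^ 2 ∂P = 2 * c * c' := by
  apply Complex.ofReal_injective
  rw [ofReal_integral_norm_sq]
  simp only [starRingEnd_apply, star_dotProduct_eq_star_dotProduct_star]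
  rw [hY.integral_star_dotProduct_mul_dotProduct hYX
    (by fun_prop : Measurable fun x : Fin 2 → ℂ => star (symplecticJ x))
    continuous_symplecticJ.measurable (fun i => (memLp_symplecticJ hX.memLp i).star)
    (memLp_symplecticJ hX.memLp)]
  simp only [star_symplecticJ_dotProduct_symplecticJ, hX.integral_star_dotProduct_self,
    Fintype.card_fin]
  push_cast
  ring

end Quaternion

theorem quaternion_product_moments_general
    {Ω : Type} [MeasurableSpace Ω] (P : Measure Ω)
    (αj βj αk βk : Ω → ℂ)
    (hL2αj : MemLp αj 2 P) (hL2βj : MemLp βj 2 P)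
    (hL2αk : MemLp αk 2 P) (hL2βk : MemLp βk 2 P)
    (hindep : IndepFun (fun ω => (αj ω, βj ω)) (fun ω => (αk ω, βk ω)) P)
    (habs2 : (∫ ω, ‖αj ω‖ ^ 2 ∂P = 1 / 2) ∧ (∫ ω, ‖βj ω‖ ^ 2 ∂P = 1 / 2) ∧
      (∫ ω, ‖αk ω‖ ^ 2 ∂P = 1 / 2) ∧ (∫ ω, ‖βk ω‖ ^ 2 ∂P = 1 / 2))
    (hsq : (∫ ω, (αj ω) ^ 2 ∂P = 0) ∧ (∫ ω, (βj ω) ^ 2 ∂P = 0) ∧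
      (∫ ω, (αk ω) ^ 2 ∂P = 0) ∧ (∫ ω, (βk ω) ^ 2 ∂P = 0))
    (hcross : (∫ ω, αj ω * βj ω ∂P = 0) ∧ (∫ ω, αk ω * βk ω ∂P = 0) ∧
      (∫ ω, αj ω * starRingEnd ℂ (βj ω) ∂P = 0) ∧
      (∫ ω, αk ω * starRingEnd ℂ (βk ω) ∂P = 0)) :
    (∫ ω, (αk ω * starRingEnd ℂ (αj ω) + βk ω * starRingEnd ℂ (βj ω)) ^ 2 ∂P = 0) ∧
    (∫ ω, (-(αk ω) * βj ω + βk ω * αj ω) ^ 2 ∂P = 0) ∧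
    (∫ ω, (αk ω * starRingEnd ℂ (αj ω) + βk ω * starRingEnd ℂ (βj ω)) *
        (-(αk ω) * βj ω + βk ω * αj ω) ∂P = 0) ∧
    (∫ ω, starRingEnd ℂ (αk ω * starRingEnd ℂ (αj ω) + βk ω * starRingEnd ℂ (βj ω)) *
        (-(αk ω) * βj ω + βk ω * αj ω) ∂P = 0) ∧
    (∫ ω, ‖αk ω * starRingEnd ℂ (αj ω) + βk ω * starRingEnd ℂ (βj ω)‖ ^ 2 ∂P = 1 / 2) ∧
    (∫ ω, ‖-(αk ω) * βj ω + βk ω * αj ω‖ ^ 2 ∂P = 1 / 2) := by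
  obtain ⟨hαj, hβj, hαk, hβk⟩ := habs2
  obtain ⟨hαj_sq, hβj_sq, hαk_sq, hβk_sq⟩ := hsq
  obtain ⟨hαβj, hαβk, hαβj_conj, hαβk_conj⟩ := hcross
  set Y : Ω → Fin 2 → ℂ := fun ω => ![αk ω, βk ω]
  set X : Ω → Fin 2 → ℂ := fun ω => ![αj ω, βj ω]
  have hYX : IndepFun Y X P := hindep.symm.comp (φ := fun p : ℂ × ℂ => ![p.1, p.2])
    (ψ := fun p : ℂ × ℂ => ![p.1, p.2]) (by fun_prop) (by fun_prop)
  have hY := isProperIsotropic_pair hL2αk hL2βk hαk_sq hβk_sq hαβk hαk hβk hαβk_conj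
  have hX := isProperIsotropic_pair hL2αj hL2βj hαj_sq hβj_sq hαβj hαj hβj hαβj_conj
  have hϖ (ω : Ω) : αk ω * starRingEnd ℂ (αj ω) + βk ω * starRingEnd ℂ (βj ω) =
      Y ω ⬝ᵥ star (X ω) := by
    simp [Y, X, dotProduct, Fin.sum_univ_two]
  have hω (ω : Ω) : -(αk ω) * βj ω + βk ω * αj ω = Y ω ⬝ᵥ symplecticJ (X ω) := by
    simp [Y, X, symplecticJ, dotProduct, Fin.sum_univ_two]
  simp only [hϖ, hω]
  refine ⟨integral_dotProduct_star_sq_eq_zero hYX hY hX.memLp,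
    integral_dotProduct_symplecticJ_sq_eq_zero hYX hY hX.memLp,
    integral_dotProduct_star_mul_dotProduct_symplecticJ_eq_zero hYX hY hX.memLp,
    integral_conj_dotProduct_star_mul_dotProduct_symplecticJ_eq_zero hYX hY hX.memLp, ?_, ?_⟩
  · rw [integral_norm_dotProduct_star_sq hYX hY hX]; norm_num
  · rw [integral_norm_dotProduct_symplecticJ_sq hYX hY hX]; norm_num

/-- Moment identities for the entries `ϖ = α_k conj(α_j) + β_k conj(β_j)` and
`ω = -α_k β_j + β_k α_j` of the product `x_k x_j*` of two independent quaternion random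
variables: `E ϖ² = E ω² = E(ϖω) = E(conj(ϖ)ω) = 0` and `E|ϖ|² = E|ω|² = 1/2`. -/
theorem quaternion_product_moments
    {Ω : Type} [MeasurableSpace Ω] (P : Measure Ω) [IsProbabilityMeasure P]
    (αj βj αk βk : Ω → ℂ)
    (hmαj : Measurable αj) (hmβj : Measurable βj)
    (hmαk : Measurable αk) (hmβk : Measurable βk)
    (hL2αj : MemLp αj 2 P) (hL2βj : MemLp βj 2 P)
    (hL2αk : MemLp αk 2 P) (hL2βk : MemLp βk 2 P)
    (hindep : IndepFun (fun ω => (αj ω, βj ω)) (fun ω => (αk ω, βk ω)) P)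
    (hmean : (∫ ω, αj ω ∂P = 0) ∧ (∫ ω, βj ω ∂P = 0) ∧
      (∫ ω, αk ω ∂P = 0) ∧ (∫ ω, βk ω ∂P = 0))
    (habs2 : (∫ ω, ‖αj ω‖ ^ 2 ∂P = 1 / 2) ∧ (∫ ω, ‖βj ω‖ ^ 2 ∂P = 1 / 2) ∧
      (∫ ω, ‖αk ω‖ ^ 2 ∂P = 1 / 2) ∧ (∫ ω, ‖βk ω‖ ^ 2 ∂P = 1 / 2))
    (hsq : (∫ ω, (αj ω) ^ 2 ∂P = 0) ∧ (∫ ω, (βj ω) ^ 2 ∂P = 0) ∧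
      (∫ ω, (αk ω) ^ 2 ∂P = 0) ∧ (∫ ω, (βk ω) ^ 2 ∂P = 0))
    (hcross : (∫ ω, αj ω * βj ω ∂P = 0) ∧ (∫ ω, αk ω * βk ω ∂P = 0) ∧
      (∫ ω, αj ω * starRingEnd ℂ (βj ω) ∂P = 0) ∧
      (∫ ω, αk ω * starRingEnd ℂ (βk ω) ∂P = 0)) :
    (∫ ω, (αk ω * starRingEnd ℂ (αj ω) + βk ω * starRingEnd ℂ (βj ω)) ^ 2 ∂P = 0) ∧
    (∫ ω, (-(αk ω) * βj ω + βk ω * αj ω) ^ 2 ∂P = 0) ∧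
    (∫ ω, (αk ω * starRingEnd ℂ (αj ω) + βk ω * starRingEnd ℂ (βj ω)) *
        (-(αk ω) * βj ω + βk ω * αj ω) ∂P = 0) ∧
    (∫ ω, starRingEnd ℂ (αk ω * starRingEnd ℂ (αj ω) + βk ω * starRingEnd ℂ (βj ω)) *
        (-(αk ω) * βj ω + βk ω * αj ω) ∂P = 0) ∧
    (∫ ω, ‖αk ω * starRingEnd ℂ (αj ω) + βk ω * starRingEnd ℂ (βj ω)‖ ^ 2 ∂P = 1 / 2) ∧
    (∫ ω, ‖-(αk ω) * βj ω + βk ω * αj ω‖ ^ 2 ∂P = 1 / 2) :=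
  quaternion_product_moments_general P αj βj αk βk hL2αj hL2βj hL2αk hL2βk hindep habs2 hsq hcross
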